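/- Let V be a finite set of atomic propositions partitioned into inputs I and outputs O, and let φ = ψ1 ∧ ((φ1 ∧ φ2) → ψ2) be an LTL formula with prop(φ) = V, where prop(φ1) ∩ prop(φ2) = ∅, prop(φ2) ∩ prop(ψ1) = ∅, and prop(φ2) ∩ prop(ψ2) = ∅. Assume that ¬φ2 is unrealizable over V and that there exists a counterstrategy for its language (so every word compatible with this counterstrategy satisfies φ2). Then φ' = ψ1 ∧ (φ1 → ψ2) is realizable over the variables V1 = prop(ψ1) ∪ prop(φ1) ∪ prop(ψ2) (with inputs I ∩ V1 and outputs O ∩ V1) if and only if φ is realizable over V. -/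
import Mathlib


namespace SpecDecomp

variable {α : Type*}

/-- Restriction of an infinite word: intersect each letter with `X`. -/
def restrict (σ : ℕ → Set α) (X : Set α) : ℕ → Set α := fun n => σ n ∩ X

/-- Restriction of a finite word (history): intersect each letter with `X`. -/
def restrictFin (h : List (Set α)) (X : Set α) : List (Set α) := h.map (· ∩ X)

/-- Letterwise union of infinite words. -/
def wordUnion (σ₁ σ₂ : ℕ → Set α) : ℕ → Set α := fun n => σ₁ n ∪ σ₂ n

/-- The set of infinite words over the alphabet `2^W`. -/
def WordsOver (W : Set α) : Set (ℕ → Set α) := {σ | ∀ n, σ n ⊆ W}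

/-- Non-contradictory composition of a language `L₁` over `2^{W₁}` and a
language `L₂` over `2^{W₂}`. -/
def comp (L₁ : Set (ℕ → Set α)) (W₁ : Set α) (L₂ : Set (ℕ → Set α)) (W₂ : Set α) :
    Set (ℕ → Set α) :=
  {σ | ∃ σ₁ ∈ L₁, ∃ σ₂ ∈ L₂, restrict σ₁ W₂ = restrict σ₂ W₁ ∧ σ = wordUnion σ₁ σ₂}

/-- The finite history consisting of the first `n` letters of `σ`. -/
def hist (σ : ℕ → Set α) (n : ℕ) : List (Set α) := (List.range n).map σ

/-- An infinite word over `2^W` is compatible with the implementation `f`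
(for variables `W`, inputs `Iw`, outputs `Ow`). -/
def CompatibleImpl (W Iw Ow : Set α) (f : List (Set α) → Set α → Set α)
    (σ : ℕ → Set α) : Prop :=
  (∀ n, σ n ⊆ W) ∧ ∀ n, f (hist σ n) (σ n ∩ Iw) = σ n ∩ Ow

/-- The implementation `f` realizes the language `L`. -/
def Realizes (W Iw Ow : Set α) (f : List (Set α) → Set α → Set α)
    (L : Set (ℕ → Set α)) : Prop :=
  ∀ σ, CompatibleImpl W Iw Ow f σ → σ ∈ L

/-- `L` is realizable over variables `W` with inputs `Iw` and outputs `Ow`. -/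
def Realizable (W Iw Ow : Set α) (L : Set (ℕ → Set α)) : Prop :=
  ∃ f : List (Set α) → Set α → Set α,
    (∀ h i, f h i ⊆ Ow) ∧ Realizes W Iw Ow f L

/-- An infinite word over `2^W` is compatible with the counterstrategy `fc`. -/
def CompatibleCounter (W Iw : Set α) (fc : List (Set α) → Set α)
    (σ : ℕ → Set α) : Prop :=
  (∀ n, σ n ⊆ W) ∧ ∀ n, fc (hist σ n) = σ n ∩ Iw

/-- `fc` is a counterstrategy for `L`: every compatible word lies in the
complement of `L`. -/
def Counterstrategy (W Iw : Set α) (fc : List (Set α) → Set α)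
    (L : Set (ℕ → Set α)) : Prop :=
  ∀ σ, CompatibleCounter W Iw fc σ → σ ∉ L

/-- Syntax of linear-time temporal logic. -/
inductive LTL (α : Type*) where
  | atom : α → LTL α
  | tt : LTL α
  | not : LTL α → LTL α
  | or : LTL α → LTL α → LTL α
  | and : LTL α → LTL α → LTL α
  | next : LTL α → LTL α
  | until_ : LTL α → LTL α → LTL α

namespace LTL

/-- The set of atomic propositions occurring in a formula
(`true` contributes no atomic propositions). -/
def props : LTL α → Set α
  | atom a => {a}
  | tt => ∅
  | not φ => props φ
  | or φ ψ => props φ ∪ props ψ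
  | and φ ψ => props φ ∪ props ψ
  | next φ => props φ
  | until_ φ ψ => props φ ∪ props ψ

/-- Satisfaction of an LTL formula at position `n` of the infinite word `σ`. -/
def SatAt (σ : ℕ → Set α) : LTL α → ℕ → Prop
  | atom a, n => a ∈ σ n
  | tt, _ => True
  | not φ, n => ¬ SatAt σ φ n
  | or φ ψ, n => SatAt σ φ n ∨ SatAt σ ψ n
  | and φ ψ, n => SatAt σ φ n ∧ SatAt σ ψ n
  | next φ, n => SatAt σ φ (n + 1)
  | until_ φ ψ, n =>
      ∃ m, n ≤ m ∧ SatAt σ ψ m ∧ ∀ k, n ≤ k → k < m → SatAt σ φ k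

/-- `σ ⊨ φ`. -/
def Sat (σ : ℕ → Set α) (φ : LTL α) : Prop := SatAt σ φ 0

/-- Implication, as the usual abbreviation `φ → ψ ≡ ¬φ ∨ ψ`. -/
def impl (φ ψ : LTL α) : LTL α := or (not φ) ψ

/-- The language of `φ` over the alphabet `2^W`. -/
def LangOver (φ : LTL α) (W : Set α) : Set (ℕ → Set α) :=
  {σ | (∀ n, σ n ⊆ W) ∧ Sat σ φ}

end LTL

section Aux

lemma satAt_congr (σ τ : ℕ → Set α) :
    ∀ χ : LTL α, (∀ a ∈ χ.props, ∀ n, a ∈ σ n ↔ a ∈ τ n) →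
      ∀ n, LTL.SatAt σ χ n ↔ LTL.SatAt τ χ n := by
  intro χ
  induction χ with
  | atom a =>
      intro h n
      simpa [LTL.SatAt] using h a (by simp [LTL.props]) n
  | tt => intro _ n; simp [LTL.SatAt]
  | not φ ih => intro h n; simp only [LTL.SatAt]; rw [ih h n]
  | or φ ψ ih1 ih2 =>
      intro h n
      have h1 := ih1 (fun a ha => h a (Set.mem_union_left _ ha))
      have h2 := ih2 (fun a ha => h a (Set.mem_union_right _ ha))
      simp only [LTL.SatAt]; rw [h1 n, h2 n]
  | and φ ψ ih1 ih2 =>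
      intro h n
      have h1 := ih1 (fun a ha => h a (Set.mem_union_left _ ha))
      have h2 := ih2 (fun a ha => h a (Set.mem_union_right _ ha))
      simp only [LTL.SatAt]; rw [h1 n, h2 n]
  | next φ ih => intro h n; simp only [LTL.SatAt]; rw [ih h (n + 1)]
  | until_ φ ψ ih1 ih2 =>
      intro h n
      have h1 := ih1 (fun a ha => h a (Set.mem_union_left _ ha))
      have h2 := ih2 (fun a ha => h a (Set.mem_union_right _ ha))
      simp only [LTL.SatAt]
      constructor
      · rintro ⟨m, hm, hsm, hk⟩
        exact ⟨m, hm, (h2 m).mp hsm, fun k hk1 hk2 => (h1 k).mp (hk k hk1 hk2)⟩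
      · rintro ⟨m, hm, hsm, hk⟩
        exact ⟨m, hm, (h2 m).mpr hsm, fun k hk1 hk2 => (h1 k).mpr (hk k hk1 hk2)⟩

lemma hist_succ (σ : ℕ → Set α) (n : ℕ) : hist σ (n + 1) = hist σ n ++ [σ n] := by
  simp [hist, List.range_succ]

lemma hist_restrict (σ : ℕ → Set α) (X : Set α) (n : ℕ) :
    hist (restrict σ X) n = restrictFin (hist σ n) X := by
  simp [hist, restrict, restrictFin, List.map_map]

/-- One step of the simulated merged play / shadow play. -/
def stepMT (fc : List (Set α) → Set α) (f : List (Set α) → Set α → Set α)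
    (I P₂ O : Set α) :
    List (Set α) × List (Set α) → Set α → List (Set α) × List (Set α) :=
  fun MT x =>
    (MT.1 ++ [x ∪ ((fc MT.2 ∩ P₂) ∪ (f MT.1 ((x ∩ I) ∪ (fc MT.2 ∩ P₂)) ∩ P₂))],
     MT.2 ++ [fc MT.2 ∪
       ((x ∪ ((fc MT.2 ∩ P₂) ∪ (f MT.1 ((x ∩ I) ∪ (fc MT.2 ∩ P₂)) ∩ P₂))) ∩ O)])

/-- Run the simulation along a history. -/
def runMT (fc : List (Set α) → Set α) (f : List (Set α) → Set α → Set α)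
    (I P₂ O : Set α) (h : List (Set α)) : List (Set α) × List (Set α) :=
  h.foldl (stepMT fc f I P₂ O) ([], [])

/-- The letter over `P₂` added at the current step. -/
def pLet (fc : List (Set α) → Set α) (f : List (Set α) → Set α → Set α)
    (I P₂ O : Set α) (h : List (Set α)) (x : Set α) : Set α :=
  (fc (runMT fc f I P₂ O h).2 ∩ P₂) ∪
    (f (runMT fc f I P₂ O h).1 ((x ∩ I) ∪ (fc (runMT fc f I P₂ O h).2 ∩ P₂)) ∩ P₂)

lemma runMT_append (fc : List (Set α) → Set α) (f : List (Set α) → Set α → Set α)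
    (I P₂ O : Set α) (h : List (Set α)) (x : Set α) :
    runMT fc f I P₂ O (h ++ [x]) = stepMT fc f I P₂ O (runMT fc f I P₂ O h) x := by
  simp [runMT, List.foldl_append]

end Aux

/-- dropping an assumption in the presence of an additional
conjunct `ψ₁` preserves equirealizability. -/
theorem assumption_dropping_with_conjunct
    (V I O : Set α) (hVfin : V.Finite) (hpart : I ∪ O = V) (hIO : I ∩ O = ∅)
    (φ₁ φ₂ ψ₁ ψ₂ : LTL α)
    (hV : (ψ₁.and ((φ₁.and φ₂).impl ψ₂)).props = V)
    (h₁₂ : φ₁.props ∩ φ₂.props = ∅)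
    (h₂ψ₁ : φ₂.props ∩ ψ₁.props = ∅)
    (h₂ψ₂ : φ₂.props ∩ ψ₂.props = ∅)
    (hunreal : ¬ Realizable V I O ((LTL.not φ₂).LangOver V))
    (hcs : ∃ fc : List (Set α) → Set α, (∀ h, fc h ⊆ I) ∧
      Counterstrategy V I fc ((LTL.not φ₂).LangOver V)) :
    Realizable (ψ₁.props ∪ φ₁.props ∪ ψ₂.props)
        (I ∩ (ψ₁.props ∪ φ₁.props ∪ ψ₂.props))
        (O ∩ (ψ₁.props ∪ φ₁.props ∪ ψ₂.props))
        ((ψ₁.and (φ₁.impl ψ₂)).LangOver (ψ₁.props ∪ φ₁.props ∪ ψ₂.props)) ↔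
      Realizable V I O ((ψ₁.and ((φ₁.and φ₂).impl ψ₂)).LangOver V) := by
  classical
  obtain ⟨fc, hfcI, hcounter⟩ := hcs
  have hVeq : V = (ψ₁.props ∪ φ₁.props ∪ ψ₂.props) ∪ φ₂.props := by
    rw [← hV]; ext a; simp [LTL.props, LTL.impl]; tauto
  have hP2V1 : ∀ a ∈ φ₂.props, a ∉ ψ₁.props ∪ φ₁.props ∪ ψ₂.props := by
    intro a h2 hv1
    rcases hv1 with (hv1 | hv1) | hv1
    · exact absurd (h₂ψ₁ ▸ (⟨h2, hv1⟩ : a ∈ φ₂.props ∩ ψ₁.props)) (Set.notMem_empty a)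
    · exact absurd (h₁₂ ▸ (⟨hv1, h2⟩ : a ∈ φ₁.props ∩ φ₂.props)) (Set.notMem_empty a)
    · exact absurd (h₂ψ₂ ▸ (⟨h2, hv1⟩ : a ∈ φ₂.props ∩ ψ₂.props)) (Set.notMem_empty a)
  have hV1V : ψ₁.props ∪ φ₁.props ∪ ψ₂.props ⊆ V := hVeq ▸ Set.subset_union_left
  have hP2V : φ₂.props ⊆ V := hVeq ▸ Set.subset_union_right
  have hOV : O ⊆ V := by rw [← hpart]; exact Set.subset_union_right
  have hIV : I ⊆ V := by rw [← hpart]; exact Set.subset_union_left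
  have hIO' : ∀ a ∈ I, a ∉ O := by
    intro a ha hb
    exact absurd (hIO ▸ (⟨ha, hb⟩ : a ∈ I ∩ O)) (Set.notMem_empty a)
  have hψ₁V1 : ψ₁.props ⊆ ψ₁.props ∪ φ₁.props ∪ ψ₂.props :=
    fun a ha => Or.inl (Or.inl ha)
  have hφ₁V1 : φ₁.props ⊆ ψ₁.props ∪ φ₁.props ∪ ψ₂.props :=
    fun a ha => Or.inl (Or.inr ha)
  have hψ₂V1 : ψ₂.props ⊆ ψ₁.props ∪ φ₁.props ∪ ψ₂.props := fun a ha => Or.inr ha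
  constructor
  · -- easy direction: realizability over V1 transfers to V
    rintro ⟨g, hgO, hgreal⟩
    refine ⟨fun h i => g (restrictFin h (ψ₁.props ∪ φ₁.props ∪ ψ₂.props))
        (i ∩ (ψ₁.props ∪ φ₁.props ∪ ψ₂.props)), fun h i => (hgO _ _).trans
        Set.inter_subset_left, ?_⟩
    rintro σ ⟨hσV, hσf⟩
    have hcomp' : CompatibleImpl (ψ₁.props ∪ φ₁.props ∪ ψ₂.props)
        (I ∩ (ψ₁.props ∪ φ₁.props ∪ ψ₂.props))
        (O ∩ (ψ₁.props ∪ φ₁.props ∪ ψ₂.props)) g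
        (restrict σ (ψ₁.props ∪ φ₁.props ∪ ψ₂.props)) := by
      refine ⟨fun n => Set.inter_subset_right, fun n => ?_⟩
      have h2 := hσf n
      simp only at h2
      have hsub : σ n ∩ O ⊆ ψ₁.props ∪ φ₁.props ∪ ψ₂.props :=
        h2 ▸ (hgO _ _).trans Set.inter_subset_right
      rw [hist_restrict]
      have h1 : restrict σ (ψ₁.props ∪ φ₁.props ∪ ψ₂.props) n ∩
          (I ∩ (ψ₁.props ∪ φ₁.props ∪ ψ₂.props)) =
          (σ n ∩ I) ∩ (ψ₁.props ∪ φ₁.props ∪ ψ₂.props) := by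
        ext a; simp only [restrict, Set.mem_inter_iff]; tauto
      rw [h1, h2]
      ext a
      simp only [restrict, Set.mem_inter_iff]
      constructor
      · rintro ⟨h, h'⟩; exact ⟨⟨h, hsub ⟨h, h'⟩⟩, h', hsub ⟨h, h'⟩⟩
      · rintro ⟨⟨h, _⟩, h', _⟩; exact ⟨h, h'⟩
    obtain ⟨hσ'W, hσ'sat⟩ := hgreal _ hcomp'
    have hagree : ∀ a ∈ ψ₁.props ∪ φ₁.props ∪ ψ₂.props, ∀ n,
        (a ∈ σ n ↔ a ∈ restrict σ (ψ₁.props ∪ φ₁.props ∪ ψ₂.props) n) :=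
      fun a ha n => ⟨fun h => ⟨h, ha⟩, fun h => h.1⟩
    refine ⟨hσV, ?_⟩
    simp only [LTL.Sat, LTL.SatAt, LTL.impl] at hσ'sat ⊢
    obtain ⟨hs1, hs2⟩ := hσ'sat
    refine ⟨(satAt_congr σ _ ψ₁ (fun a ha => hagree a (hψ₁V1 ha)) 0).mpr hs1, ?_⟩
    rcases hs2 with h | h
    · left
      rintro ⟨hφ1, -⟩
      exact h ((satAt_congr σ _ φ₁ (fun a ha => hagree a (hφ₁V1 ha)) 0).mp hφ1)
    · right
      exact (satAt_congr σ _ ψ₂ (fun a ha => hagree a (hψ₂V1 ha)) 0).mpr h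
  · -- hard direction
    rintro ⟨f, hfO, hfreal⟩
    refine ⟨fun h i => f (runMT fc f I φ₂.props O h).1
        (i ∪ (fc (runMT fc f I φ₂.props O h).2 ∩ φ₂.props)) ∩
        (O ∩ (ψ₁.props ∪ φ₁.props ∪ ψ₂.props)),
      fun h i => Set.inter_subset_right, ?_⟩
    rintro σ' ⟨hσ'V1, hσ'f⟩
    set p : ℕ → Set α := fun n => pLet fc f I φ₂.props O (hist σ' n) (σ' n) with hp
    set σ : ℕ → Set α := fun n => σ' n ∪ p n with hσdef
    set τ : ℕ → Set α := fun n =>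
      fc (runMT fc f I φ₂.props O (hist σ' n)).2 ∪ (σ n ∩ O) with hτdef
    have hrun : ∀ n, runMT fc f I φ₂.props O (hist σ' n) = (hist σ n, hist τ n) := by
      intro n
      induction n with
      | zero => simp [runMT, hist]
      | succ n ih =>
          have hpn : p n = (fc (hist τ n) ∩ φ₂.props) ∪
              (f (hist σ n) ((σ' n ∩ I) ∪ (fc (hist τ n) ∩ φ₂.props)) ∩ φ₂.props) := by
            simp only [hp, pLet, ih]
          have hτn : τ n = fc (hist τ n) ∪ (σ n ∩ O) := by
            simp only [hτdef, ih]
          rw [hist_succ σ', runMT_append, ih, hist_succ σ, hist_succ τ]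
          simp only [stepMT]
          rw [Prod.mk.injEq]
          refine ⟨?_, ?_⟩
          · rw [show σ n = σ' n ∪ p n from rfl, hpn]
          · rw [hτn, show σ n = σ' n ∪ p n from rfl, hpn]
    set pin : ℕ → Set α := fun n => fc (hist τ n) ∩ φ₂.props with hpin
    set out : ℕ → Set α := fun n => f (hist σ n) ((σ' n ∩ I) ∪ pin n) with hout
    have hpn : ∀ n, p n = pin n ∪ (out n ∩ φ₂.props) := by
      intro n
      simp only [hp, pLet, hrun n, hpin, hout]
    have hpP2 : ∀ n, p n ⊆ φ₂.props := by
      intro n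
      rw [hpn n]
      exact Set.union_subset Set.inter_subset_right Set.inter_subset_right
    have hσV : ∀ n, σ n ⊆ V :=
      fun n => Set.union_subset ((hσ'V1 n).trans hV1V) ((hpP2 n).trans hP2V)
    have houtV1 : ∀ n, σ' n ∩ O = out n ∩ (ψ₁.props ∪ φ₁.props ∪ ψ₂.props) := by
      intro n
      have h := hσ'f n
      simp only [hrun n] at h
      have hi : σ' n ∩ (I ∩ (ψ₁.props ∪ φ₁.props ∪ ψ₂.props)) = σ' n ∩ I := by
        ext a
        simp only [Set.mem_inter_iff]
        exact ⟨fun ⟨h1, h2, _⟩ => ⟨h1, h2⟩, fun ⟨h1, h2⟩ => ⟨h1, h2, hσ'V1 n h1⟩⟩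
      rw [hi] at h
      replace h : out n ∩ (O ∩ (ψ₁.props ∪ φ₁.props ∪ ψ₂.props)) =
          σ' n ∩ (O ∩ (ψ₁.props ∪ φ₁.props ∪ ψ₂.props)) := h
      ext a
      have hoO : a ∈ out n → a ∈ O := fun ha => hfO _ _ ha
      have hv1 : a ∈ σ' n → a ∈ ψ₁.props ∪ φ₁.props ∪ ψ₂.props := fun ha => hσ'V1 n ha
      have h' : a ∈ out n ∩ (O ∩ (ψ₁.props ∪ φ₁.props ∪ ψ₂.props)) ↔
          a ∈ σ' n ∩ (O ∩ (ψ₁.props ∪ φ₁.props ∪ ψ₂.props)) := by rw [h]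
      simp only [Set.mem_inter_iff] at h' ⊢
      tauto
    have hσI : ∀ n, σ n ∩ I = (σ' n ∩ I) ∪ pin n := by
      intro n
      have := hpn n
      ext a
      have h1 : a ∈ p n ↔ a ∈ pin n ∨ (a ∈ out n ∧ a ∈ φ₂.props) := by
        rw [this]; simp [Set.mem_inter_iff]
      have h2 : a ∈ pin n → a ∈ I := fun ha => hfcI _ ha.1
      have h3 : a ∈ out n → a ∉ I := fun ha hi => hIO' a hi (hfO _ _ ha)
      simp only [show σ n = σ' n ∪ p n from rfl, Set.mem_inter_iff, Set.mem_union]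
      tauto
    have hσO : ∀ n, σ n ∩ O = out n := by
      intro n
      ext a
      have h1 : a ∈ p n ↔ a ∈ pin n ∨ (a ∈ out n ∧ a ∈ φ₂.props) := by
        rw [hpn n]; simp [Set.mem_inter_iff]
      have h2 : a ∈ pin n → a ∉ O := fun ha => hIO' a (hfcI _ ha.1)
      have h3 : a ∈ out n → a ∈ O := fun ha => hfO _ _ ha
      have h4 : a ∈ σ' n ∧ a ∈ O ↔ a ∈ out n ∧
          a ∈ ψ₁.props ∪ φ₁.props ∪ ψ₂.props := by
        have := houtV1 n
        constructor
        · intro hh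
          have : a ∈ out n ∩ (ψ₁.props ∪ φ₁.props ∪ ψ₂.props) := this ▸ hh
          exact this
        · intro hh
          have : a ∈ σ' n ∩ O := this.symm ▸ hh
          exact this
      have h5 : a ∈ out n → a ∈ ψ₁.props ∪ φ₁.props ∪ ψ₂.props ∨ a ∈ φ₂.props := by
        intro ha
        have : a ∈ V := hOV (h3 ha)
        rw [hVeq] at this
        exact this
      have hσmem : a ∈ σ n ↔ a ∈ σ' n ∨ a ∈ p n := Iff.rfl
      constructor
      · rintro ⟨hσa, hO⟩
        rcases hσmem.mp hσa with hs | hp'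
        · exact (h4.mp ⟨hs, hO⟩).1
        · rcases h1.mp hp' with hpin' | ⟨ho, -⟩
          · exact absurd hO (h2 hpin')
          · exact ho
      · intro ho
        rcases h5 ho with hv1 | hp2
        · exact ⟨hσmem.mpr (Or.inl (h4.mpr ⟨ho, hv1⟩).1), h3 ho⟩
        · exact ⟨hσmem.mpr (Or.inr (h1.mpr (Or.inr ⟨ho, hp2⟩))), h3 ho⟩
    have hσcomp : CompatibleImpl V I O f σ := by
      refine ⟨hσV, fun n => ?_⟩
      rw [hσI n]
      exact (hσO n).symm
    obtain ⟨-, hσsat⟩ := hfreal σ hσcomp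
    -- the shadow word is compatible with the counterstrategy
    have hτeq : ∀ n, τ n = fc (hist τ n) ∪ (σ n ∩ O) := by
      intro n
      simp only [hτdef, hrun n]
    have hτV : ∀ n, τ n ⊆ V := by
      intro n
      rw [hτeq n]
      exact Set.union_subset ((hfcI _).trans hIV)
        (Set.inter_subset_right.trans hOV)
    have hτc : CompatibleCounter V I fc τ := by
      refine ⟨hτV, fun n => ?_⟩
      rw [hτeq n]
      ext a
      have h2 : a ∈ fc (hist τ n) → a ∈ I := fun ha => hfcI _ ha
      have h3 : a ∈ O → a ∉ I := fun ha hi => hIO' a hi ha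
      simp only [Set.mem_inter_iff, Set.mem_union]
      tauto
    have hτφ₂ : LTL.SatAt τ φ₂ 0 := by
      by_contra hcon
      exact hcounter τ hτc ⟨hτV, hcon⟩
    -- σ and τ agree on the propositions of φ₂
    have hagree2 : ∀ a ∈ φ₂.props, ∀ n, (a ∈ σ n ↔ a ∈ τ n) := by
      intro a ha n
      have h1 : a ∈ p n ↔ a ∈ pin n ∨ (a ∈ out n ∧ a ∈ φ₂.props) := by
        rw [hpn n]; simp [Set.mem_inter_iff]
      have h2 : a ∈ σ' n → False := fun h => hP2V1 a ha (hσ'V1 n h)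
      have h3 : a ∈ out n → a ∈ O := fun h => hfO _ _ h
      have h4 : a ∈ σ n ∧ a ∈ O ↔ a ∈ out n := by
        have := hσO n
        constructor
        · intro hh
          have : a ∈ σ n ∩ O := hh
          rwa [hσO n] at this
        · intro hh
          have : a ∈ σ n ∩ O := (hσO n).symm ▸ hh
          exact this
      have hσmem : a ∈ σ n ↔ a ∈ σ' n ∨ a ∈ p n := Iff.rfl
      have hpinmem : a ∈ pin n ↔ a ∈ fc (hist τ n) := ⟨fun h => h.1, fun h => ⟨h, ha⟩⟩
      rw [hτeq n]
      constructor
      · intro hs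
        rcases hσmem.mp hs with hs' | hp'
        · exact absurd hs' h2
        · rcases h1.mp hp' with hpin' | ⟨ho, -⟩
          · exact Or.inl (hpinmem.mp hpin')
          · exact Or.inr ⟨(h4.mpr ho).1, (h4.mpr ho).2⟩
      · intro ht
        rcases ht with hf | hso
        · exact hσmem.mpr (Or.inr (h1.mpr (Or.inl (hpinmem.mpr hf))))
        · exact hσmem.mpr (Or.inr (h1.mpr (Or.inr ⟨h4.mp ⟨hso.1, hso.2⟩, ha⟩)))
    have hσφ₂ : LTL.SatAt σ φ₂ 0 := (satAt_congr σ τ φ₂ hagree2 0).mpr hτφ₂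
    -- σ and σ' agree on V1
    have hagree1 : ∀ a ∈ ψ₁.props ∪ φ₁.props ∪ ψ₂.props, ∀ n,
        (a ∈ σ n ↔ a ∈ σ' n) := by
      intro a ha n
      have h2 : a ∈ p n → False := fun h => hP2V1 a (hpP2 n h) ha
      simp only [show σ n = σ' n ∪ p n from rfl, Set.mem_union]
      tauto
    refine ⟨hσ'V1, ?_⟩
    simp only [LTL.Sat, LTL.SatAt, LTL.impl] at hσsat ⊢
    obtain ⟨hs1, hs2⟩ := hσsat
    refine ⟨(satAt_congr σ σ' ψ₁ (fun a ha => hagree1 a (hψ₁V1 ha)) 0).mp hs1, ?_⟩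
    rcases hs2 with h | h
    · left
      intro hφ1
      exact h ⟨(satAt_congr σ σ' φ₁ (fun a ha => hagree1 a (hφ₁V1 ha)) 0).mpr hφ1,
        hσφ₂⟩
    · right
      exact (satAt_congr σ σ' ψ₂ (fun a ha => hagree1 a (hψ₂V1 ha)) 0).mp h


end SpecDecomp
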